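/- Let p be a prime, q = 1/p, and let n ≥ 1 and μ ≥ 1 be integers. Set k = ⌊n/2⌋, s = ⌊(μ−1)/2⌋, and R = q^{s+1} · ∑_{j=0}^{k−1} (q^μ(1−q^n) − q^{2s+2}(1−q^{2j+1})) · q^{2j} · Π_{2j}(q)·Π_{j+s}(q²) / (Π_j(q²)² · Π_s(q²)). Then R < q^{3μ/2}, where q^{3μ/2} denotes the real power p^{−3μ/2}. -/

import Mathlib

/-- `Π_n(t) = ∏_{j=1}^n (1 - t^j)`. -/
noncomputable def PiProd (n : ℕ) (t : ℝ) : ℝ :=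
  ∏ j ∈ Finset.range n, (1 - t ^ (j + 1))

/-!
Write `μ = 2s + 1 + ε` with `ε ∈ {0, 1}` and `x = q²`. Each summand is at most `q^(μ+ε) x^j`:
the coefficient is at most `q^(μ+ε)`, the ratio `Π_{j+s}(x) / Π_s(x)` is at most `1`, and so is
`Π_{2j}(q) / Π_j(x)²`, because pairing the factors of `Π_{2j}(q)` gives
`(1 - q^(2i+1))(1 - q^(2i+2)) ≤ (1 - x^(i+1))²`. Summing the geometric series,
`R ≤ q^(s+1+μ+ε) / (1 - q²) ≤ q^(3μ/2) √q / (1 - q²)`, and `√q < 1 - q²` since `q ≤ 1/2`.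
-/

lemma PiProd_zero (t : ℝ) : PiProd 0 t = 1 := Finset.prod_range_zero _

lemma PiProd_succ (n : ℕ) (t : ℝ) : PiProd (n + 1) t = PiProd n t * (1 - t ^ (n + 1)) :=
  Finset.prod_range_succ _ n

section PiProd

variable {t : ℝ}

lemma one_sub_pow_nonneg (h0 : 0 ≤ t) (h1 : t ≤ 1) (n : ℕ) : 0 ≤ 1 - t ^ n :=
  sub_nonneg.2 (pow_le_one₀ h0 h1)

lemma PiProd_nonneg (h0 : 0 ≤ t) (h1 : t ≤ 1) (n : ℕ) : 0 ≤ PiProd n t :=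
  Finset.prod_nonneg fun j _ => one_sub_pow_nonneg h0 h1 (j + 1)

lemma PiProd_antitone (h0 : 0 ≤ t) (h1 : t ≤ 1) : Antitone (PiProd · t) := by
  refine antitone_nat_of_succ_le fun n => ?_
  rw [PiProd_succ]
  exact mul_le_of_le_one_right (PiProd_nonneg h0 h1 n) (sub_le_self _ (pow_nonneg h0 _))

lemma PiProd_two_mul_le_sq (h0 : 0 ≤ t) (h1 : t ≤ 1) (j : ℕ) :
    PiProd (2 * j) t ≤ PiProd j (t ^ 2) ^ 2 := by
  induction j with
  | zero => simp [PiProd_zero]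
  | succ j ih =>
    have hodd : 1 - t ^ (2 * j + 1) ≤ 1 - t ^ (2 * j + 2) :=
      sub_le_sub_left (pow_le_pow_of_le_one h0 h1 (by omega)) 1
    calc PiProd (2 * (j + 1)) t
        = PiProd (2 * j) t * ((1 - t ^ (2 * j + 1)) * (1 - t ^ (2 * j + 2))) := by
          rw [show 2 * (j + 1) = 2 * j + 1 + 1 by ring, PiProd_succ, PiProd_succ]; ring
      _ ≤ PiProd j (t ^ 2) ^ 2 * (1 - t ^ (2 * j + 2)) ^ 2 := by
          have heven := one_sub_pow_nonneg h0 h1 (2 * j + 2)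
          rw [sq (1 - _)]
          exact mul_le_mul ih (mul_le_mul_of_nonneg_right hodd heven)
            (mul_nonneg (one_sub_pow_nonneg h0 h1 _) heven) (sq_nonneg _)
      _ = PiProd (j + 1) (t ^ 2) ^ 2 := by rw [PiProd_succ, ← pow_mul]; ring

end PiProd

lemma summand_le {q c C : ℝ} (hq0 : 0 ≤ q) (hq1 : q < 1) (hc : c ≤ C) (hC : 0 ≤ C) (j s : ℕ) :
    c * q ^ (2 * j) * PiProd (2 * j) q * PiProd (j + s) (q ^ 2) /
        (PiProd j (q ^ 2) ^ 2 * PiProd s (q ^ 2)) ≤ C * (q ^ 2) ^ j := by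
  have hx0 : 0 ≤ q ^ 2 := sq_nonneg q
  have hx1 : q ^ 2 < 1 := pow_lt_one₀ hq0 hq1 two_ne_zero
  have hpairs : PiProd (2 * j) q / PiProd j (q ^ 2) ^ 2 ≤ 1 :=
    div_le_one_of_le₀ (PiProd_two_mul_le_sq hq0 hq1.le j) (sq_nonneg _)
  have htail : PiProd (j + s) (q ^ 2) / PiProd s (q ^ 2) ≤ 1 :=
    div_le_one_of_le₀ (PiProd_antitone hx0 hx1.le (Nat.le_add_left s j))
      (PiProd_nonneg hx0 hx1.le s)
  set a := PiProd (2 * j) q / PiProd j (q ^ 2) ^ 2 * (PiProd (j + s) (q ^ 2) / PiProd s (q ^ 2))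
  have htail0 : 0 ≤ PiProd (j + s) (q ^ 2) / PiProd s (q ^ 2) :=
    div_nonneg (PiProd_nonneg hx0 hx1.le _) (PiProd_nonneg hx0 hx1.le s)
  have ha0 : 0 ≤ a :=
    mul_nonneg (div_nonneg (PiProd_nonneg hq0 hq1.le _) (sq_nonneg _)) htail0
  have ha1 : a ≤ 1 := mul_le_one₀ hpairs htail0 htail
  have hca : c * a ≤ C := (mul_le_mul_of_nonneg_right hc ha0).trans (mul_le_of_le_one_right hC ha1)
  calc c * q ^ (2 * j) * PiProd (2 * j) q * PiProd (j + s) (q ^ 2) /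
        (PiProd j (q ^ 2) ^ 2 * PiProd s (q ^ 2))
      = (q ^ 2) ^ j * (c * a) := by
        rw [mul_div_mul_comm, mul_div_assoc, pow_mul]; ring
    _ ≤ C * (q ^ 2) ^ j := by
        rw [mul_comm C]; exact mul_le_mul_of_nonneg_left hca (pow_nonneg hx0 j)

lemma sum_summand_le {q C : ℝ} (c : ℕ → ℝ) (hq0 : 0 ≤ q) (hq1 : q < 1) (hc : ∀ j, c j ≤ C)
    (hC : 0 ≤ C) (k s : ℕ) :
    ∑ j ∈ Finset.range k, c j * q ^ (2 * j) * PiProd (2 * j) q * PiProd (j + s) (q ^ 2) /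
        (PiProd j (q ^ 2) ^ 2 * PiProd s (q ^ 2)) ≤ C / (1 - q ^ 2) := by
  have hx1 : q ^ 2 < 1 := pow_lt_one₀ hq0 hq1 two_ne_zero
  calc _ ≤ ∑ j ∈ Finset.range k, C * (q ^ 2) ^ j :=
        Finset.sum_le_sum fun j _ => summand_le hq0 hq1 (hc j) hC j s
    _ = C * ∑ j ∈ Finset.Ico 0 k, (q ^ 2) ^ j := by rw [Finset.mul_sum, Finset.range_eq_Ico]
    _ ≤ C * ((q ^ 2) ^ 0 / (1 - q ^ 2)) :=
        mul_le_mul_of_nonneg_left (geom_sum_Ico_le_of_lt_one (sq_nonneg q) hx1) hC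
    _ = C / (1 - q ^ 2) := by rw [pow_zero, mul_one_div]

lemma coefficient_le_pow {q : ℝ} (hq0 : 0 ≤ q) (hq1 : q ≤ 1) {μ s ε : ℕ} (hε : ε ≤ 1)
    (hμ : μ = 2 * s + 1 + ε) (n j : ℕ) :
    q ^ μ * (1 - q ^ n) - q ^ (2 * s + 2) * (1 - q ^ (2 * j + 1)) ≤ q ^ (μ + ε) := by
  have hqn : 0 ≤ q ^ n := pow_nonneg hq0 n
  have hqm : 0 ≤ q ^ μ := pow_nonneg hq0 μ
  have hodd : q ^ (2 * j + 1) ≤ q := pow_le_of_le_one hq0 hq1 (by omega)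
  interval_cases ε
  · have heven : q ^ (2 * j + 2) ≤ q := pow_le_of_le_one hq0 hq1 (by omega)
    have : q ^ (2 * s + 2) = q ^ μ * q := by rw [hμ, ← pow_succ]
    rw [this, add_zero]
    have := one_sub_pow_nonneg hq0 hq1 (2 * j + 1)
    nlinarith [mul_nonneg hqm (add_nonneg hqn (mul_nonneg hq0 this))]
  · have : q ^ (2 * s + 2) = q ^ μ := by rw [hμ]
    rw [this, pow_succ q μ]
    nlinarith [mul_nonneg hqm (sub_nonneg.2 hodd), mul_nonneg hqm hqn]

lemma pow_le_rpow_mul_sqrt {q : ℝ} (hq0 : 0 < q) (hq1 : q ≤ 1) {N : ℕ} {r : ℝ}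
    (h : r + 1 / 2 ≤ N) : q ^ N ≤ q ^ r * √q := by
  rw [Real.sqrt_eq_rpow, ← Real.rpow_add hq0, ← Real.rpow_natCast]
  exact Real.rpow_le_rpow_of_exponent_ge hq0 hq1 h

lemma sqrt_lt_one_sub_sq {q : ℝ} (hq0 : 0 ≤ q) (hq : q ≤ 1 / 2) : √q < 1 - q ^ 2 := by
  have h : 3 / 4 ≤ 1 - q ^ 2 := by nlinarith
  rw [Real.sqrt_lt' (by linarith)]
  nlinarith

theorem R_lt_q_pow_general (p : ℕ) (hp : p.Prime) (q : ℝ) (hq : q = 1 / p)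
    (n μ : ℕ) (hμ : 1 ≤ μ) (k s : ℕ)
    (hs : s = (μ - 1) / 2) (R : ℝ)
    (hR : R = q ^ (s + 1) * ∑ j ∈ Finset.range k,
      (q ^ μ * (1 - q ^ n) - q ^ (2 * s + 2) * (1 - q ^ (2 * j + 1))) * q ^ (2 * j) *
        PiProd (2 * j) q * PiProd (j + s) (q ^ 2) /
          (PiProd j (q ^ 2) ^ 2 * PiProd s (q ^ 2))) :
    R < q ^ ((3 * (μ : ℝ)) / 2) := by
  have hq0 : 0 < q := by rw [hq]; exact one_div_pos.2 (Nat.cast_pos.2 hp.pos)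
  have hqh : q ≤ 1 / 2 := by
    rw [hq]; gcongr; exact_mod_cast hp.two_le
  have hq1 : q < 1 := by linarith
  have hx : 0 < 1 - q ^ 2 := sub_pos.2 (pow_lt_one₀ hq0.le hq1 two_ne_zero)
  obtain ⟨ε, hε, hμε⟩ : ∃ ε, ε ≤ 1 ∧ μ = 2 * s + 1 + ε := ⟨μ - (2 * s + 1), by omega, by omega⟩
  have hRle : R ≤ q ^ (s + 1 + (μ + ε)) / (1 - q ^ 2) := by
    rw [hR, pow_add q (s + 1), mul_div_assoc]
    exact mul_le_mul_of_nonneg_left (sum_summand_le _ hq0.le hq1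
      (coefficient_le_pow hq0.le hq1.le hε hμε n) (by positivity) k s) (by positivity)
  have hexp : 3 * (μ : ℝ) / 2 + 1 / 2 ≤ ((s + 1 + (μ + ε) : ℕ) : ℝ) := by
    have : 3 * μ + 1 ≤ 2 * (s + 1 + (μ + ε)) := by omega
    have : (3 * μ + 1 : ℝ) ≤ 2 * (s + 1 + (μ + ε) : ℕ) := by exact_mod_cast this
    linarith
  have hsqrt : √q / (1 - q ^ 2) < 1 := (div_lt_one hx).2 (sqrt_lt_one_sub_sq hq0.le hqh)
  calc R ≤ q ^ (s + 1 + (μ + ε)) / (1 - q ^ 2) := hRle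
    _ ≤ q ^ (3 * (μ : ℝ) / 2) * √q / (1 - q ^ 2) :=
        div_le_div_of_nonneg_right (pow_le_rpow_mul_sqrt hq0 hq1.le hexp) hx.le
    _ < q ^ (3 * (μ : ℝ) / 2) := by
        rw [mul_div_assoc]
        exact mul_lt_of_lt_one_right (Real.rpow_pos_of_pos hq0 _) hsqrt

theorem R_lt_q_pow (p : ℕ) (hp : p.Prime) (q : ℝ) (hq : q = 1 / p)
    (n μ : ℕ) (hn : 1 ≤ n) (hμ : 1 ≤ μ) (k s : ℕ) (hk : k = n / 2)
    (hs : s = (μ - 1) / 2) (R : ℝ)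
    (hR : R = q ^ (s + 1) * ∑ j ∈ Finset.range k,
      (q ^ μ * (1 - q ^ n) - q ^ (2 * s + 2) * (1 - q ^ (2 * j + 1))) * q ^ (2 * j) *
        PiProd (2 * j) q * PiProd (j + s) (q ^ 2) /
          (PiProd j (q ^ 2) ^ 2 * PiProd s (q ^ 2))) :
    R < q ^ ((3 * (μ : ℝ)) / 2) :=
  R_lt_q_pow_general p hp q hq n μ hμ k s hs R hR
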